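/- For any Q ≥ 1, the sum over all fractions γ_i in F_Q of the index ν_2(γ_i) equals 3·N(Q) − 1, where N(Q) is the number of fractions in F_Q. -/

import Mathlib

open MeasureTheory

/-- The Farey fractions of order `Q`, as a set of rationals in `(0,1]`
with denominator at most `Q` (rationals are automatically in lowest terms). -/
def fareySet (Q : ℕ) : Set ℚ := {x | 0 < x ∧ x ≤ 1 ∧ x.den ≤ Q}

/-- `IsFarey Q N p q` asserts that `i ↦ p i / q i` (for `1 ≤ i ≤ N`) enumerates the
Farey fractions of order `Q` in increasing order, in lowest terms, extended to all
integer indices by the periodicity `γ_{i+N} = γ_i + 1`. -/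
structure IsFarey (Q N : ℕ) (p q : ℤ → ℤ) : Prop where
  qpos : ∀ i : ℤ, 0 < q i
  coprime : ∀ i : ℤ, Int.gcd (p i) (q i) = 1
  mono : ∀ i j : ℤ, i < j → (p i : ℚ) / (q i) < (p j : ℚ) / (q j)
  mem : ∀ i : ℤ, 1 ≤ i → i ≤ (N : ℤ) → ((p i : ℚ) / (q i)) ∈ fareySet Q
  surj : ∀ x ∈ fareySet Q, ∃ i : ℤ, 1 ≤ i ∧ i ≤ (N : ℤ) ∧ (p i : ℚ) / (q i) = x
  period_p : ∀ i : ℤ, p (i + N) = p i + q i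
  period_q : ∀ i : ℤ, q (i + N) = q i

/-- The `k`-index `ν_k(γ_i) = p_{i+k-1} q_{i-1} - p_{i-1} q_{i+k-1}`. -/
def nuk (p q : ℤ → ℤ) (k : ℕ) (i : ℤ) : ℤ :=
  p (i + k - 1) * q (i - 1) - p (i - 1) * q (i + k - 1)

/-!
Consecutive Farey fractions `a / b < c / d` satisfy `b c - a d = 1`, so the vectors
`(q_i, p_i)` form a unimodular chain from `0/1` to `1/1`, and `ν_2(γ_i) q_i = q_{i-1} + q_{i+1}`.
At a vertex of maximal denominator this forces `ν_2 = 1`. Deleting such a vertex (an ear) keeps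
the chain unimodular and lowers the indices of its two neighbours by one, so the sum of the
indices drops by exactly `3`. By induction on the length `n` of the chain,
`∑_{0 ≤ j ≤ n} ν_2(γ_j) = 3 n - 1 + q_{-1} + q_{n+1}`; for the Farey sequence
`ν_2(γ_0) = q_{-1} + q_1` and `q_{N+1} = q_1`, which leaves `3 N - 1` for `1 ≤ i ≤ N`.
-/

open Finset

lemma nuk_one (p q : ℤ → ℤ) (i : ℤ) : nuk p q 1 i = p i * q (i - 1) - p (i - 1) * q i := by
  simp [nuk]

lemma nuk_two (p q : ℤ → ℤ) (i : ℤ) :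
    nuk p q 2 i = p (i + 1) * q (i - 1) - p (i - 1) * q (i + 1) := by
  simp only [nuk, Nat.cast_ofNat, show i + 2 - 1 = i + 1 by ring]

-- For `a, b, c ∈ ℤ²` with `det (a, b) = det (b, c) = 1` one has `a + c = det (a, c) • b`.
lemma nuk_two_mul_p {p q : ℤ → ℤ} {i : ℤ} (h₀ : nuk p q 1 i = 1)
    (h₁ : nuk p q 1 (i + 1) = 1) :
    nuk p q 2 i * p i = p (i - 1) + p (i + 1) := by
  rw [nuk_one] at h₀ h₁
  rw [nuk_two]
  simp only [add_sub_cancel_right] at h₁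
  linear_combination p (i + 1) * h₀ + p (i - 1) * h₁

lemma nuk_two_mul_q {p q : ℤ → ℤ} {i : ℤ} (h₀ : nuk p q 1 i = 1)
    (h₁ : nuk p q 1 (i + 1) = 1) :
    nuk p q 2 i * q i = q (i - 1) + q (i + 1) := by
  rw [nuk_one] at h₀ h₁
  rw [nuk_two]
  simp only [add_sub_cancel_right] at h₁
  linear_combination q (i + 1) * h₀ + q (i - 1) * h₁

def succAbove (i j : ℤ) : ℤ := if j < i then j else j + 1

lemma succAbove_of_lt {i j : ℤ} (h : j < i) : succAbove i j = j := if_pos h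

lemma succAbove_of_le {i j : ℤ} (h : i ≤ j) : succAbove i j = j + 1 := if_neg (not_lt.2 h)

lemma sum_comp_succAbove {M : Type*} [AddCommGroup M] (f : ℤ → M) {a n i : ℤ} (hai : a ≤ i)
    (hin : i ≤ n + 1) :
    ∑ j ∈ Icc a n, f (succAbove i j) = ∑ j ∈ Icc a (n + 1), f j - f i := by
  rw [← sum_erase_eq_sub (mem_Icc.2 ⟨hai, hin⟩)]
  refine sum_nbij' (succAbove i) (fun j => if j < i then j else j - 1) ?_ ?_ ?_ ?_ (fun _ _ => rfl)
    <;> intro j hj <;> simp only [mem_Icc, mem_erase, succAbove] at hj ⊢ <;> split_ifs <;> omega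

/-- `nuk p q 1 j` is the determinant of the consecutive vectors `(q (j - 1), p (j - 1))` and
`(q j, p j)`; it is required to be `1` also across the outer neighbours at `-1` and `n + 1`. -/
structure IsUnimodularChain (n : ℤ) (p q : ℤ → ℤ) : Prop where
  nuk_one_eq : ∀ j, 0 ≤ j → j ≤ n + 1 → nuk p q 1 j = 1
  q_pos : ∀ j, 0 ≤ j → j ≤ n → 0 < q j
  p_nonneg : ∀ j, 0 ≤ j → j ≤ n → 0 ≤ p j
  p_le_q : ∀ j, 0 ≤ j → j ≤ n → p j ≤ q j
  q_zero : q 0 = 1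
  q_last : q n = 1

namespace IsUnimodularChain

variable {n i : ℤ} {p q : ℤ → ℤ}

-- An interior vertex of maximal denominator is an ear.
lemma exists_nuk_two_eq_one (h : IsUnimodularChain n p q) (hn : 2 ≤ n) :
    ∃ i, 1 ≤ i ∧ i ≤ n - 1 ∧ nuk p q 2 i = 1 := by
  obtain ⟨i, hi, hmax⟩ := (Icc 1 (n - 1)).exists_max_image q (nonempty_Icc.2 (by omega))
  rw [mem_Icc] at hi
  have hle : ∀ j, 0 ≤ j → j ≤ n → q j ≤ q i := fun j hj₀ hjn => by
    have := h.q_pos i (by omega) (by omega)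
    rcases eq_or_ne j 0 with rfl | hj
    · rw [h.q_zero]; omega
    rcases eq_or_ne j n with rfl | hj'
    · rw [h.q_last]; omega
    exact hmax j (mem_Icc.2 ⟨by omega, by omega⟩)
  have h₀ := h.nuk_one_eq i (by omega) (by omega)
  have h₁ := h.nuk_one_eq (i + 1) (by omega) (by omega)
  have hνq := nuk_two_mul_q h₀ h₁
  have hνp := nuk_two_mul_p h₀ h₁
  have hqi := h.q_pos i (by omega) (by omega)
  have hqm := h.q_pos (i - 1) (by omega) (by omega)
  have hqp := h.q_pos (i + 1) (by omega) (by omega)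
  have hlem := hle (i - 1) (by omega) (by omega)
  have hlep := hle (i + 1) (by omega) (by omega)
  refine ⟨i, hi.1, hi.2, ?_⟩
  have hν_pos : 0 < nuk p q 2 i := pos_of_mul_pos_left (by omega) hqi.le
  have hν_le : nuk p q 2 i ≤ 2 := le_of_mul_le_mul_right (by linarith) hqi
  by_contra hν
  -- `ν = 2` forces three equal denominators, hence all equal to `1`, and then three
  -- consecutive numerators in `[0, 1]`.
  have hν2 : nuk p q 2 i = 2 := by omega
  rw [hν2] at hνq hνp
  have hqpi : q (i + 1) = q i := by omega
  rw [nuk_one, add_sub_cancel_right, hqpi] at h₁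
  have hqi1 : q i = 1 := Int.eq_one_of_mul_eq_one_right hqi.le
    (show q i * (p (i + 1) - p i) = 1 by linear_combination h₁)
  have := h.p_nonneg (i - 1) (by omega) (by omega)
  have := h.p_le_q (i + 1) (by omega) (by omega)
  rw [hqi1] at h₁
  omega

lemma comp_succAbove (h : IsUnimodularChain (n + 1) p q) (hi : 1 ≤ i) (hin : i ≤ n)
    (hear : nuk p q 2 i = 1) :
    IsUnimodularChain n (p ∘ succAbove i) (q ∘ succAbove i) := by
  have hs : ∀ j, 0 ≤ j → j ≤ n → 0 ≤ succAbove i j ∧ succAbove i j ≤ n + 1 := by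
    intro j _ _
    unfold succAbove
    split_ifs <;> omega
  refine ⟨fun j hj₀ hjn => ?_, fun j h₀ h₁ => h.q_pos _ (hs j h₀ h₁).1 (hs j h₀ h₁).2,
    fun j h₀ h₁ => h.p_nonneg _ (hs j h₀ h₁).1 (hs j h₀ h₁).2,
    fun j h₀ h₁ => h.p_le_q _ (hs j h₀ h₁).1 (hs j h₀ h₁).2, ?_, ?_⟩
  · rcases lt_trichotomy j i with hj | rfl | hj
    · simpa (disch := omega) only [nuk_one, Function.comp_apply, succAbove_of_lt]
        using h.nuk_one_eq j hj₀ (by omega)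
    · simpa (disch := omega) only [nuk_one, nuk_two, Function.comp_apply, succAbove_of_lt,
        succAbove_of_le] using hear
    · simpa (disch := omega) only [nuk_one, Function.comp_apply, succAbove_of_le,
        sub_add_cancel, add_sub_cancel_right] using h.nuk_one_eq (j + 1) (by omega) (by omega)
  · simpa (disch := omega) only [Function.comp_apply, succAbove_of_lt] using h.q_zero
  · simpa (disch := omega) only [Function.comp_apply, succAbove_of_le] using h.q_last

lemma nuk_two_comp_succAbove (h : IsUnimodularChain (n + 1) p q) (hi : 1 ≤ i) (hin : i ≤ n)
    (hear : nuk p q 2 i = 1) (j : ℤ) :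
    nuk (p ∘ succAbove i) (q ∘ succAbove i) 2 j =
      nuk p q 2 (succAbove i j) - (if j = i - 1 then 1 else 0) - (if j = i then 1 else 0) := by
  have h₀ := h.nuk_one_eq i (by omega) (by omega)
  have h₁ := h.nuk_one_eq (i + 1) (by omega) (by omega)
  have hp := nuk_two_mul_p h₀ h₁
  have hq := nuk_two_mul_q h₀ h₁
  rw [hear, one_mul] at hp hq
  rcases lt_trichotomy j (i - 1) with hj | rfl | hj
  · simp (disch := omega) only [nuk_two, Function.comp_apply, succAbove_of_lt, if_neg hj.ne,
      if_neg (show j ≠ i by omega), sub_zero]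
  · have hprev := h.nuk_one_eq (i - 1) (by omega) (by omega)
    simp (disch := omega) only [nuk_two, nuk_one, Function.comp_apply, succAbove_of_lt,
      succAbove_of_le, if_true, if_neg (show i - 1 ≠ i by omega), sub_add_cancel] at hprev ⊢
    linear_combination -hprev - q (i - 1 - 1) * hp + p (i - 1 - 1) * hq
  rcases eq_or_lt_of_le (show i ≤ j by omega) with rfl | hj'
  · have hnext := h.nuk_one_eq (i + 1 + 1) (by omega) (by omega)
    simp (disch := omega) only [nuk_two, nuk_one, Function.comp_apply, succAbove_of_lt,
      succAbove_of_le, if_true, if_neg (show i ≠ i - 1 by omega), add_sub_cancel_right,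
      sub_zero] at hnext ⊢
    linear_combination -hnext - p (i + 1 + 1) * hq + q (i + 1 + 1) * hp
  · simp (disch := omega) only [nuk_two, Function.comp_apply, succAbove_of_le,
      if_neg (show j ≠ i - 1 by omega), if_neg hj'.ne', sub_zero, sub_add_cancel,
      add_sub_cancel_right]

theorem sum_nuk_two (h : IsUnimodularChain n p q) (hn : 1 ≤ n) :
    ∑ j ∈ Icc 0 n, nuk p q 2 j = 3 * n - 1 + q (-1) + q (n + 1) := by
  induction n, hn using Int.leInduction generalizing p q with
  | base =>
    have h₀ := nuk_two_mul_q (h.nuk_one_eq 0 le_rfl (by omega))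
      (h.nuk_one_eq 1 (by omega) (by omega))
    have h₁ := nuk_two_mul_q (h.nuk_one_eq 1 (by omega) (by omega))
      (h.nuk_one_eq 2 (by omega) (by omega))
    have hq₀ := h.q_zero
    have hq₁ := h.q_last
    norm_num at h₀ h₁ hq₁ ⊢
    rw [show Icc (0 : ℤ) 1 = {0, 1} by rfl, sum_pair zero_ne_one]
    rw [hq₀, hq₁] at h₀ h₁
    linear_combination h₀ + h₁
  | succ n hn ih =>
    obtain ⟨i, hi, hin, hear⟩ := h.exists_nuk_two_eq_one (by omega)
    have := ih (h.comp_succAbove hi (by omega) hear)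
    simp only [h.nuk_two_comp_succAbove hi (by omega) hear, sum_sub_distrib, sum_ite_eq',
      mem_Icc, sum_comp_succAbove _ (show 0 ≤ i by omega) (show i ≤ n + 1 by omega),
      Function.comp_apply, succAbove_of_lt (show -1 < i by omega),
      succAbove_of_le (show i ≤ n + 1 by omega), hear] at this
    split_ifs at this <;> omega

end IsUnimodularChain

lemma exists_mul_sub_mul_eq_one_of_window {a b : ℤ} (hb : 0 < b) (hab : IsCoprime a b)
    (Q : ℤ) :
    ∃ x y, b * x - a * y = 1 ∧ Q - b < y ∧ y ≤ Q := by
  obtain ⟨u, v, huv⟩ := hab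
  have hmod := Int.emod_def (Q + u) b
  have := Int.emod_nonneg (Q + u) hb.ne'
  have := Int.emod_lt_of_pos (Q + u) hb
  refine ⟨v + (Q + u) / b * a, -u + (Q + u) / b * b, by linear_combination huv, ?_, ?_⟩ <;>
    linarith

lemma den_intCast_div_le {x y : ℤ} (hy : 0 < y) : ((((x : ℚ) / y).den : ℤ)) ≤ y := by
  have := Rat.den_dvd x y
  rw [Rat.divInt_eq_div] at this
  exact Int.le_of_dvd hy this

-- The next fraction after `a / b` in `F_Q` is the solution `x / y` of `b x - a y = 1` with
-- `Q - b < y ≤ Q`.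
lemma mul_sub_mul_eq_one_of_adjacent {Q : ℕ} {a b c d : ℤ} (hb : 0 < b) (hbQ : b ≤ Q)
    (hd : 0 < d) (hdQ : d ≤ Q) (ha : 0 ≤ a) (hcd : c ≤ d) (hab : IsCoprime a b)
    (hcd' : IsCoprime c d) (hlt : (a : ℚ) / b < c / d)
    (hgap : ∀ x ∈ fareySet Q, ¬((a : ℚ) / b < x ∧ x < c / d)) :
    b * c - a * d = 1 := by
  obtain ⟨x, y, hxy, hQy, hyQ⟩ := exists_mul_sub_mul_eq_one_of_window hb hab Q
  have hy : 0 < y := by omega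
  have hb' : (0 : ℚ) < b := by exact_mod_cast hb
  have hd' : (0 : ℚ) < d := by exact_mod_cast hd
  have hy' : (0 : ℚ) < y := by exact_mod_cast hy
  have hk : 0 < b * c - a * d := by
    rw [div_lt_div_iff₀ hb' hd'] at hlt
    linarith [(by exact_mod_cast hlt : a * d < c * b)]
  have hdx : d * x ≤ c * y := by
    by_contra! hcon
    nlinarith [show d = b * (d * x - c * y) + y * (b * c - a * d) by linear_combination -d * hxy]
  have hx : 0 < x := by nlinarith
  have hmem : (x : ℚ) / y ∈ fareySet Q := by
    refine ⟨by positivity, (div_le_one hy').2 (by exact_mod_cast (by nlinarith : x ≤ y)), ?_⟩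
    have := den_intCast_div_le (x := x) hy
    omega
  have hax : (a : ℚ) / b < x / y := by
    rw [div_lt_div_iff₀ hb' hy']
    exact_mod_cast (by linarith : a * y < x * b)
  have hxc : (x : ℚ) / y = c / d := by
    refine le_antisymm ?_ (not_lt.1 fun h => hgap _ hmem ⟨hax, h⟩)
    rw [div_le_div_iff₀ hy' hd']
    exact_mod_cast (by linarith : x * d ≤ c * y)
  rw [div_eq_div_iff hy'.ne' hd'.ne'] at hxc
  have hxc' : x * d = c * y := by exact_mod_cast hxc
  -- `x / y = c / d` makes `b c - a d` a common divisor of `c` and `d`.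
  have hkc : b * c - a * d ∣ c := ⟨x, by linear_combination a * hxc' - c * hxy⟩
  have hkd : b * c - a * d ∣ d := ⟨y, by linear_combination b * hxc' - d * hxy⟩
  rcases Int.isUnit_iff.1 (hcd'.isUnit_of_dvd' hkc hkd) with h | h <;> omega

lemma nuk_add_of_shear {p q : ℤ → ℤ} {N : ℤ} (hp : ∀ i, p (i + N) = p i + q i)
    (hq : ∀ i, q (i + N) = q i) (k : ℕ) (i : ℤ) : nuk p q k (i + N) = nuk p q k i := by
  simp only [nuk, show ∀ m : ℤ, i + N + k - m = i + k - m + N by intro m; ring,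
    show i + N - 1 = i - 1 + N by ring, hp, hq]
  ring

namespace IsFarey

variable {Q N : ℕ} {p q : ℤ → ℤ}

lemma isCoprime (hF : IsFarey Q N p q) (i : ℤ) : IsCoprime (p i) (q i) :=
  Int.isCoprime_iff_gcd_eq_one.2 (hF.coprime i)

lemma last_eq (hF : IsFarey Q N p q) (hQ : 1 ≤ Q) : 1 ≤ (N : ℤ) ∧ p N = 1 ∧ q N = 1 := by
  obtain ⟨j, hj₁, hjN, hj⟩ := hF.surj 1 ⟨one_pos, le_rfl, by simpa using hQ⟩
  have hγN := (hF.mem N (by omega) le_rfl).2.1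
  have hjN' : j = N := by
    by_contra hne
    linarith [hF.mono j N (by omega)]
  have hqN := hF.qpos N
  rw [hjN', div_eq_one_iff_eq (by exact_mod_cast hqN.ne')] at hj
  have hpN : p N = q N := by exact_mod_cast hj
  have := hF.coprime N
  rw [hpN, Int.gcd_self] at this
  omega

lemma zero_eq (hF : IsFarey Q N p q) (hQ : 1 ≤ Q) : p 0 = 0 ∧ q 0 = 1 := by
  have hp := hF.period_p 0
  have hq := hF.period_q 0
  rw [zero_add] at hp hq
  have := hF.last_eq hQ
  omega

lemma q_le (hF : IsFarey Q N p q) (hQ : 1 ≤ Q) {i : ℤ} (h₀ : 0 ≤ i) (hN : i ≤ N) :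
    q i ≤ Q := by
  rcases h₀.eq_or_lt with rfl | h₁
  · rw [(hF.zero_eq hQ).2]
    exact_mod_cast hQ
  have hden : (((p i : ℚ) / q i).den : ℤ) = q i := by
    simpa using Rat.den_div_eq_of_coprime (hF.qpos i) (hF.coprime i)
  have := (hF.mem i h₁ hN).2.2
  omega

lemma p_nonneg (hF : IsFarey Q N p q) (hQ : 1 ≤ Q) {i : ℤ} (h₀ : 0 ≤ i) (hN : i ≤ N) :
    0 ≤ p i := by
  rcases h₀.eq_or_lt with rfl | h₁
  · exact (hF.zero_eq hQ).1.ge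
  have := (hF.mem i h₁ hN).1
  have hq : (0 : ℚ) < q i := by exact_mod_cast hF.qpos i
  exact_mod_cast ((div_pos_iff_of_pos_right hq).1 this).le

lemma p_le_q (hF : IsFarey Q N p q) (hQ : 1 ≤ Q) {i : ℤ} (h₀ : 0 ≤ i) (hN : i ≤ N) :
    p i ≤ q i := by
  rcases h₀.eq_or_lt with rfl | h₁
  · have := hF.zero_eq hQ
    omega
  have := (hF.mem i h₁ hN).2.1
  have hq : (0 : ℚ) < q i := by exact_mod_cast hF.qpos i
  exact_mod_cast (div_le_one hq).1 this

lemma not_mem_Ioo (hF : IsFarey Q N p q) (i : ℤ) {x : ℚ} (hx : x ∈ fareySet Q) :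
    ¬((p i : ℚ) / q i < x ∧ x < p (i + 1) / q (i + 1)) := by
  rintro ⟨h₁, h₂⟩
  obtain ⟨j, -, -, rfl⟩ := hF.surj x hx
  have hmono : StrictMono fun i => (p i : ℚ) / q i := fun i j => hF.mono i j
  have := hmono.lt_iff_lt.1 h₁
  have := hmono.lt_iff_lt.1 h₂
  omega

lemma nuk_one_eq_one_of_mem (hF : IsFarey Q N p q) (hQ : 1 ≤ Q) {j : ℤ} (h₁ : 1 ≤ j)
    (hN : j ≤ N) : nuk p q 1 j = 1 := by
  have := mul_sub_mul_eq_one_of_adjacent (hF.qpos (j - 1)) (hF.q_le hQ (by omega) (by omega))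
    (hF.qpos j) (hF.q_le hQ (by omega) (by omega)) (hF.p_nonneg hQ (by omega) (by omega))
    (hF.p_le_q hQ (by omega) (by omega)) (hF.isCoprime (j - 1)) (hF.isCoprime j)
    (hF.mono (j - 1) j (by omega))
    (fun x hx => by simpa only [sub_add_cancel] using hF.not_mem_Ioo (j - 1) hx)
  rw [nuk_one]
  linarith

lemma nuk_one_eq_one (hF : IsFarey Q N p q) (hQ : 1 ≤ Q) {j : ℤ} (h₀ : 0 ≤ j)
    (hN : j ≤ N + 1) : nuk p q 1 j = 1 := by
  have hshear := nuk_add_of_shear hF.period_p hF.period_q 1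
  have hN₁ := (hF.last_eq hQ).1
  rcases h₀.eq_or_lt with rfl | h₁
  · rw [← hshear, zero_add]
    exact hF.nuk_one_eq_one_of_mem hQ hN₁ le_rfl
  rcases hN.eq_or_lt with rfl | hN'
  · rw [add_comm, hshear]
    exact hF.nuk_one_eq_one_of_mem hQ le_rfl hN₁
  exact hF.nuk_one_eq_one_of_mem hQ h₁ (by omega)

lemma isUnimodularChain (hF : IsFarey Q N p q) (hQ : 1 ≤ Q) : IsUnimodularChain N p q where
  nuk_one_eq _ h₀ hN := hF.nuk_one_eq_one hQ h₀ hN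
  q_pos i _ _ := hF.qpos i
  p_nonneg _ h₀ hN := hF.p_nonneg hQ h₀ hN
  p_le_q _ h₀ hN := hF.p_le_q hQ h₀ hN
  q_zero := (hF.zero_eq hQ).2
  q_last := (hF.last_eq hQ).2.2

end IsFarey

/-- Hall–Shiu: the sum of the index over `F_Q` is `3 N(Q) − 1`. -/
theorem sum_nu2 (Q N : ℕ) (p q : ℤ → ℤ) (hQ : 1 ≤ Q) (hF : IsFarey Q N p q) :
    (∑ i ∈ Finset.Icc (1 : ℤ) (N : ℤ), nuk p q 2 i) = 3 * (N : ℤ) - 1 := by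
  have hN := (hF.last_eq hQ).1
  have hsum := (hF.isUnimodularChain hQ).sum_nuk_two hN
  have hν₀ := nuk_two_mul_q (hF.nuk_one_eq_one hQ le_rfl (by omega))
    (hF.nuk_one_eq_one hQ (by omega) (by omega))
  rw [(hF.zero_eq hQ).2, mul_one, zero_sub, zero_add] at hν₀
  have hqN : q (N + 1) = q 1 := by rw [add_comm]; exact hF.period_q 1
  rw [← insert_Icc_add_one_left_eq_Icc (by omega), sum_insert (by simp), zero_add] at hsum
  linarith
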